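/- arXiv:2112.05177 — 2 statements merged into one kernel-verified Lean document; each statement's English description precedes it below -/
import Mathlib

section
/- If (A, ρ̄) is a symmetric right partial H-comodule algebra and the antipode S of H is bijective, then the left coinvariants equal the right coinvariants: A^{coH} = A^{coH,r}. -/
/-!
Contract `a⁰⁰ ⊗ a⁰¹ ⊗ a¹` by `(b ⊗ h) ⊗ g ↦ b ⊗ h S(g)`. By (PCA4) and (PCA3) the result is
`ρ(1)(a ⊗ 1)`; if `a` is a left coinvariant, expanding `ρ(a) = (a ⊗ 1)ρ(1)` in the outer
factor instead turns it into `ρ(a)ρ(1) = ρ(a)`. Mirror-symmetrically, (PCA2) and the contraction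
`(b ⊗ h) ⊗ g ↦ b ⊗ S⁻¹(g) h`, which works because `S⁻¹(h₂) h₁ = ε(h) 1`, show that right
coinvariants are left coinvariants.
-/

open TensorProduct LinearMap

noncomputable section

variable (k : Type*) [Field k]
variable (H : Type*) [Ring H] [HopfAlgebra k H]
variable (A : Type*) [Ring A] [Algebra k A]

/-- A left partial action of a Hopf algebra `H` on an algebra `A` (Caenepeel–Janssen):
(PA1) `h·(ab) = (h₁·a)(h₂·b)`, (PA2) `1·a = a`, (PA3) `h·(g·a) = (h₁·1)((h₂g)·a)`. -/
structure PartialAction where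
  act : H →ₗ[k] A →ₗ[k] A
  pa1 : ∀ a b : A, act.flip (a * b) =
    LinearMap.mul' k A ∘ₗ TensorProduct.map (act.flip a) (act.flip b) ∘ₗ Coalgebra.comul
  pa2 : ∀ a : A, act 1 a = a
  pa3 : ∀ (g : H) (a : A), act.flip (act g a) =
    LinearMap.mul' k A ∘ₗ
      TensorProduct.map (act.flip 1) ((act.flip a) ∘ₗ LinearMap.mulRight k g) ∘ₗ Coalgebra.comul

variable {k H A}

/-- (PA4): the partial action is symmetric: `h·(g·a) = ((h₁g)·a)(h₂·1)`. -/
def PartialAction.IsSymmetric (α : PartialAction k H A) : Prop :=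
  ∀ (g : H) (a : A), α.act.flip (α.act g a) =
    LinearMap.mul' k A ∘ₗ
      TensorProduct.map ((α.act.flip a) ∘ₗ LinearMap.mulRight k g) (α.act.flip 1) ∘ₗ
        Coalgebra.comul

/-- Left invariants `A^H`. -/
def PartialAction.leftInv (α : PartialAction k H A) : Set A :=
  {a | ∀ h : H, α.act h a = a * α.act h 1}

/-- Right invariants `A^{H,r}`. -/
def PartialAction.rightInv (α : PartialAction k H A) : Set A :=
  {a | ∀ h : H, α.act h a = α.act h 1 * a}

/-- `t` is a left integral in `H`. -/
def IsLeftIntegral (t : H) : Prop := ∀ h : H, h * t = Coalgebra.counit (R := k) h • t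

/-- `t` is a right integral in `H`. -/
def IsRightIntegral (t : H) : Prop := ∀ h : H, t * h = Coalgebra.counit (R := k) h • t

/-- Convolution product on the dual `H* = H →ₗ[k] k`. -/
def conv (f g : H →ₗ[k] k) : H →ₗ[k] k :=
  LinearMap.mul' k k ∘ₗ TensorProduct.map f g ∘ₗ Coalgebra.comul

/-- `T ∈ H*` is a right integral: `T ∗ f = f(1) T`. -/
def IsRightIntegralDual (T : H →ₗ[k] k) : Prop := ∀ f : H →ₗ[k] k, conv T f = f 1 • T

/-- `T ∈ H*` is a left integral: `f ∗ T = f(1) T`. -/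
def IsLeftIntegralDual (T : H →ₗ[k] k) : Prop := ∀ f : H →ₗ[k] k, conv f T = f 1 • T

namespace PartialAction

variable (α : PartialAction k H A)

/-- `ψ (h ⊗ b) = Σ (h₁·b) ⊗ h₂`. -/
def psi : H ⊗[k] A →ₗ[k] A ⊗[k] H :=
  TensorProduct.map (TensorProduct.lift α.act) LinearMap.id
    ∘ₗ (TensorProduct.assoc k H A H).symm.toLinearMap
    ∘ₗ TensorProduct.map LinearMap.id (TensorProduct.comm k H A).toLinearMap
    ∘ₗ (TensorProduct.assoc k H H A).toLinearMap
    ∘ₗ TensorProduct.map Coalgebra.comul LinearMap.id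

/-- The smash product multiplication on `A ⊗ H`:
`(a # h)(b # g) = a(h₁·b) # h₂g`, as a linear map on the tensor square. -/
def smashMul' : (A ⊗[k] H) ⊗[k] (A ⊗[k] H) →ₗ[k] A ⊗[k] H :=
  TensorProduct.map (LinearMap.mul' k A) (LinearMap.mul' k H)
    ∘ₗ (TensorProduct.assoc k A A (H ⊗[k] H)).symm.toLinearMap
    ∘ₗ TensorProduct.map LinearMap.id
        ((TensorProduct.assoc k A H H).toLinearMap
          ∘ₗ TensorProduct.map α.psi LinearMap.id
          ∘ₗ (TensorProduct.assoc k H A H).symm.toLinearMap)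
    ∘ₗ (TensorProduct.assoc k A H (A ⊗[k] H)).toLinearMap

/-- The smash product multiplication, curried. -/
def sm : (A ⊗[k] H) →ₗ[k] (A ⊗[k] H) →ₗ[k] A ⊗[k] H := TensorProduct.curry α.smashMul'

/-- `1 # 1`. -/
def unit : A ⊗[k] H := (1 : A) ⊗ₜ[k] (1 : H)

/-- `j x = x · (1 # 1)`; the element `a #̲ h` of the partial smash product. -/
def j : A ⊗[k] H →ₗ[k] A ⊗[k] H := α.sm.flip (unit)

/-- The partial smash product `A #̲ H`, as a subspace of `A ⊗ H`. -/
def smash : Submodule k (A ⊗[k] H) := LinearMap.range α.j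

/-- The action of `A # H` on `A`: `(a # h) ▸ b = a (h·b)`. -/
def act2 : A ⊗[k] H →ₗ[k] A →ₗ[k] A :=
  TensorProduct.curry (LinearMap.mul' k A
    ∘ₗ TensorProduct.map LinearMap.id (TensorProduct.lift α.act)
    ∘ₗ (TensorProduct.assoc k A H A).toLinearMap)

end PartialAction

/-- `Φ(a # h) = a T(h)`. -/
def PhiMap (T : H →ₗ[k] k) : A ⊗[k] H →ₗ[k] A :=
  (TensorProduct.rid k A).toLinearMap ∘ₗ TensorProduct.map LinearMap.id T

/-- `θ(f) = f(t₁) t₂`. -/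
def thetaMap (t : H) : (H →ₗ[k] k) →ₗ[k] H :=
  (TensorProduct.lid k H).toLinearMap
    ∘ₗ LinearMap.applyₗ (Coalgebra.comul (R := k) t)
    ∘ₗ (TensorProduct.mapBilinear (σ₁₂ := RingHom.id k) (M := H) (N := H) (M₂ := k) (N₂ := H)).flip LinearMap.id

section Coaction

variable (k : Type*) [Field k]
variable (H : Type*) [Ring H] [HopfAlgebra k H]
variable (A : Type*) [Ring A] [Algebra k A]

/-- A right partial `H`-comodule algebra (Caenepeel–Janssen):
(PCA1) `ρ(ab) = ρ(a)ρ(b)`, (PCA2) `a⁰⁰ ⊗ a⁰¹ ⊗ a¹ = a⁰1⁰ ⊗ a¹₁1¹ ⊗ a¹₂`,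
(PCA3) `ε(a¹) a⁰ = a`. -/
structure PartialCoaction where
  rho : A →ₗ[k] A ⊗[k] H
  pca1 : ∀ a b : A, rho (a * b) = rho a * rho b
  pca2 : ∀ a : A,
    TensorProduct.map rho LinearMap.id (rho a) =
      ((TensorProduct.assoc k A H H).symm
          (TensorProduct.map LinearMap.id Coalgebra.comul (rho a)))
        * ((rho 1) ⊗ₜ (1 : H))
  pca3 : ∀ a : A,
    (TensorProduct.rid k A) (TensorProduct.map LinearMap.id Coalgebra.counit (rho a)) = a

variable {k H A}

/-- (PCA4): the partial coaction is symmetric: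
`a⁰⁰ ⊗ a⁰¹ ⊗ a¹ = 1⁰a⁰ ⊗ 1¹a¹₁ ⊗ a¹₂`. -/
def PartialCoaction.IsSymmetric (P : PartialCoaction k H A) : Prop :=
  ∀ a : A,
    TensorProduct.map P.rho LinearMap.id (P.rho a) =
      ((P.rho 1) ⊗ₜ (1 : H)) *
        ((TensorProduct.assoc k A H H).symm
          (TensorProduct.map LinearMap.id Coalgebra.comul (P.rho a)))

section TensorContraction

variable {R B C : Type*} [CommSemiring R] [Semiring B] [Algebra R B] [Semiring C] [Algebra R C]

open Algebra.TensorProduct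

def rightMulBy (T : C →ₗ[R] C) : (B ⊗[R] C) ⊗[R] C →ₗ[R] B ⊗[R] C :=
  TensorProduct.lift ((LinearMap.mul R (B ⊗[R] C)).compl₂
    ((includeRight : C →ₐ[R] B ⊗[R] C).toLinearMap ∘ₗ T))

def leftMulBy (T : C →ₗ[R] C) : (B ⊗[R] C) ⊗[R] C →ₗ[R] B ⊗[R] C :=
  TensorProduct.lift ((LinearMap.mul R (B ⊗[R] C)).flip.compl₂
    ((includeRight : C →ₐ[R] B ⊗[R] C).toLinearMap ∘ₗ T))

@[simp] lemma rightMulBy_tmul (T : C →ₗ[R] C) (w : B ⊗[R] C) (c : C) :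
    rightMulBy T (w ⊗ₜ c) = w * ((1 : B) ⊗ₜ T c) := rfl

@[simp] lemma leftMulBy_tmul (T : C →ₗ[R] C) (w : B ⊗[R] C) (c : C) :
    leftMulBy T (w ⊗ₜ c) = ((1 : B) ⊗ₜ T c) * w := rfl

lemma rightMulBy_tmul_one_mul (T : C →ₗ[R] C) (v : B ⊗[R] C) (y : (B ⊗[R] C) ⊗[R] C) :
    rightMulBy T ((v ⊗ₜ 1) * y) = v * rightMulBy T y := by
  induction y using TensorProduct.induction_on with
  | zero => simp
  | tmul w c => simp [mul_assoc]
  | add y y' hy hy' => simp [mul_add, hy, hy']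

lemma leftMulBy_mul_tmul_one (T : C →ₗ[R] C) (v : B ⊗[R] C) (y : (B ⊗[R] C) ⊗[R] C) :
    leftMulBy T (y * (v ⊗ₜ 1)) = leftMulBy T y * v := by
  induction y using TensorProduct.induction_on with
  | zero => simp
  | tmul w c => simp [mul_assoc]
  | add y y' hy hy' => simp [add_mul, hy, hy']

lemma rightMulBy_assoc_symm_tmul (T : C →ₗ[R] C) (b : B) (z : C ⊗[R] C) :
    rightMulBy T ((TensorProduct.assoc R B C C).symm (b ⊗ₜ z)) =
      b ⊗ₜ LinearMap.mul' R C (T.lTensor C z) := by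
  induction z using TensorProduct.induction_on with
  | zero => simp
  | tmul c c' => simp
  | add z z' hz hz' => simp only [TensorProduct.tmul_add, map_add, hz, hz']

lemma leftMulBy_assoc_symm_tmul (T : C →ₗ[R] C) (b : B) (z : C ⊗[R] C) :
    leftMulBy T ((TensorProduct.assoc R B C C).symm (b ⊗ₜ z)) =
      b ⊗ₜ LinearMap.mul' R C (T.rTensor C (TensorProduct.comm R C C z)) := by
  induction z using TensorProduct.induction_on with
  | zero => simp
  | tmul c c' => simp
  | add z z' hz hz' => simp only [TensorProduct.tmul_add, map_add, hz, hz']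

lemma rTensor_mul_of_map_mul {D : Type*} [Semiring D] [Algebra R D] (f : B →ₗ[R] D)
    (hf : ∀ a b, f (a * b) = f a * f b) (x y : B ⊗[R] C) :
    TensorProduct.map f LinearMap.id (x * y) =
      TensorProduct.map f LinearMap.id x * TensorProduct.map f LinearMap.id y := by
  induction x using TensorProduct.induction_on with
  | zero => simp
  | add x x' hx hx' => simp [add_mul, hx, hx']
  | tmul b c =>
    induction y using TensorProduct.induction_on with
    | zero => simp
    | add y y' hy hy' => simp [mul_add, hy, hy']
    | tmul b' c' => simp [hf]

end TensorContraction

section AntipodeInverse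

variable {R C : Type*} [CommSemiring R] [Semiring C] [HopfAlgebra R C]

lemma antipode_mul_rTensor_comm_apply (T : C →ₗ[R] C)
    (hT : ∀ c, HopfAlgebra.antipode R (T c) = c) (z : C ⊗[R] C) :
    HopfAlgebra.antipode R (LinearMap.mul' R C (T.rTensor C (TensorProduct.comm R C C z))) =
      LinearMap.mul' R C ((HopfAlgebra.antipode R).rTensor C z) := by
  induction z using TensorProduct.induction_on with
  | zero => simp
  | tmul c c' => simp [HopfAlgebra.antipode_mul_antidistrib, hT]
  | add z z' hz hz' => simp only [map_add, hz, hz']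

lemma mul_symm_antipode_rTensor_comm_comul_apply
    (hS : Function.Bijective (HopfAlgebra.antipode R (A := C))) (c : C) :
    LinearMap.mul' R C (((LinearEquiv.ofBijective _ hS).symm : C →ₗ[R] C).rTensor C
      (TensorProduct.comm R C C (Coalgebra.comul c))) = algebraMap R C (Coalgebra.counit c) := by
  apply hS.injective
  rw [antipode_mul_rTensor_comm_apply _ (LinearEquiv.ofBijective _ hS).apply_symm_apply,
    HopfAlgebra.mul_antipode_rTensor_comul_apply, Algebra.algebraMap_eq_smul_one, map_smul,
    HopfAlgebra.antipode_one]

end AntipodeInverse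

section AntipodeContraction

variable {R B C : Type*} [CommSemiring R] [Semiring B] [Algebra R B] [Semiring C] [HopfAlgebra R C]

lemma rightMulBy_antipode_assoc_symm_comul (x : B ⊗[R] C) :
    rightMulBy (HopfAlgebra.antipode R)
        ((TensorProduct.assoc R B C C).symm (TensorProduct.map LinearMap.id Coalgebra.comul x)) =
      TensorProduct.rid R B (TensorProduct.map LinearMap.id Coalgebra.counit x) ⊗ₜ 1 := by
  induction x using TensorProduct.induction_on with
  | zero => simp
  | tmul b c =>
    simp [rightMulBy_assoc_symm_tmul, HopfAlgebra.mul_antipode_lTensor_comul_apply,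
      Algebra.algebraMap_eq_smul_one, TensorProduct.smul_tmul']
  | add x x' hx hx' => simp only [map_add, hx, hx', TensorProduct.add_tmul]

lemma leftMulBy_symm_antipode_assoc_symm_comul
    (hS : Function.Bijective (HopfAlgebra.antipode R (A := C))) (x : B ⊗[R] C) :
    leftMulBy ((LinearEquiv.ofBijective _ hS).symm : C →ₗ[R] C)
        ((TensorProduct.assoc R B C C).symm (TensorProduct.map LinearMap.id Coalgebra.comul x)) =
      TensorProduct.rid R B (TensorProduct.map LinearMap.id Coalgebra.counit x) ⊗ₜ 1 := by
  induction x using TensorProduct.induction_on with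
  | zero => simp
  | tmul b c =>
    simp only [TensorProduct.map_tmul, LinearMap.id_coe, id_eq, leftMulBy_assoc_symm_tmul,
      mul_symm_antipode_rTensor_comm_comul_apply, TensorProduct.rid_tmul,
      Algebra.algebraMap_eq_smul_one, TensorProduct.tmul_smul, TensorProduct.smul_tmul']
  | add x x' hx hx' => simp only [map_add, hx, hx', TensorProduct.add_tmul]

end AntipodeContraction

namespace PartialCoaction

variable (P : PartialCoaction k H A)

lemma rTensor_rho_mul (x y : A ⊗[k] H) :
    TensorProduct.map P.rho LinearMap.id (x * y) =
      TensorProduct.map P.rho LinearMap.id x * TensorProduct.map P.rho LinearMap.id y :=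
  rTensor_mul_of_map_mul P.rho P.pca1 x y

lemma rightMulBy_antipode_rTensor_rho (hsym : P.IsSymmetric) (a : A) :
    rightMulBy (HopfAlgebra.antipode k) (TensorProduct.map P.rho LinearMap.id (P.rho a)) =
      P.rho 1 * (a ⊗ₜ 1) := by
  rw [hsym a, rightMulBy_tmul_one_mul, rightMulBy_antipode_assoc_symm_comul, P.pca3]

lemma leftMulBy_symm_antipode_rTensor_rho
    (hS : Function.Bijective (HopfAlgebra.antipode k (A := H))) (a : A) :
    leftMulBy ((LinearEquiv.ofBijective _ hS).symm : H →ₗ[k] H)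
        (TensorProduct.map P.rho LinearMap.id (P.rho a)) = (a ⊗ₜ 1) * P.rho 1 := by
  rw [P.pca2 a, leftMulBy_mul_tmul_one, leftMulBy_symm_antipode_assoc_symm_comul, P.pca3]

lemma rho_eq_rho_one_mul_of_rho_eq_mul_rho_one (hsym : P.IsSymmetric) {a : A}
    (ha : P.rho a = (a ⊗ₜ 1) * P.rho 1) : P.rho a = P.rho 1 * (a ⊗ₜ 1) := by
  have hρρ : TensorProduct.map P.rho LinearMap.id (P.rho a) =
      (P.rho a ⊗ₜ 1) * TensorProduct.map P.rho LinearMap.id (P.rho 1) := by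
    conv_lhs => rw [ha, P.rTensor_rho_mul]
    rfl
  calc P.rho a = P.rho a * P.rho 1 := by rw [← P.pca1, mul_one]
    _ = rightMulBy (HopfAlgebra.antipode k)
          ((P.rho a ⊗ₜ 1) * TensorProduct.map P.rho LinearMap.id (P.rho 1)) := by
      rw [rightMulBy_tmul_one_mul, P.rightMulBy_antipode_rTensor_rho hsym,
        ← Algebra.TensorProduct.one_def, mul_one]
    _ = P.rho 1 * (a ⊗ₜ 1) := by rw [← hρρ, P.rightMulBy_antipode_rTensor_rho hsym]

lemma rho_eq_mul_rho_one_of_rho_eq_rho_one_mul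
    (hS : Function.Bijective (HopfAlgebra.antipode k (A := H))) {a : A}
    (ha : P.rho a = P.rho 1 * (a ⊗ₜ 1)) : P.rho a = (a ⊗ₜ 1) * P.rho 1 := by
  have hρρ : TensorProduct.map P.rho LinearMap.id (P.rho a) =
      TensorProduct.map P.rho LinearMap.id (P.rho 1) * (P.rho a ⊗ₜ 1) := by
    conv_lhs => rw [ha, P.rTensor_rho_mul]
    rfl
  calc P.rho a = P.rho 1 * P.rho a := by rw [← P.pca1, one_mul]
    _ = leftMulBy ((LinearEquiv.ofBijective _ hS).symm : H →ₗ[k] H)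
          (TensorProduct.map P.rho LinearMap.id (P.rho 1) * (P.rho a ⊗ₜ 1)) := by
      rw [leftMulBy_mul_tmul_one, P.leftMulBy_symm_antipode_rTensor_rho hS,
        ← Algebra.TensorProduct.one_def, one_mul]
    _ = (a ⊗ₜ 1) * P.rho 1 := by rw [← hρρ, P.leftMulBy_symm_antipode_rTensor_rho hS]

end PartialCoaction

/-- for a symmetric right partial `H`-comodule algebra with bijective
antipode, the left coinvariants equal the right coinvariants. -/
theorem coinvariants_left_eq_right (P : PartialCoaction k H A)
    (hS : Function.Bijective (HopfAlgebra.antipode (R := k) (A := H)))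
    (hsym : P.IsSymmetric) :
    {a : A | P.rho a = (a ⊗ₜ (1 : H)) * P.rho 1} =
      {a : A | P.rho a = P.rho 1 * (a ⊗ₜ (1 : H))} :=
  Set.ext fun _ => ⟨P.rho_eq_rho_one_mul_of_rho_eq_mul_rho_one hsym,
    P.rho_eq_mul_rho_one_of_rho_eq_rho_one_mul hS⟩

end Coaction

end
end

section
/- Let H be a finite-dimensional Hopf algebra, T a left integral in H* and t a right integral in H with T(t) = 1. Then t₁T(t₂S(h)) = h for all h ∈ H. -/
open TensorProduct LinearMap

noncomputable section

variable (k : Type*) [Field k]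
variable (H : Type*) [Ring H] [HopfAlgebra k H]
variable (A : Type*) [Ring A] [Algebra k A]

variable {k H A}

/-! If `t` is a right integral, expanding `Δ(t h₁)(1 ⊗ S h₂)` in two ways gives
`Δ(t)(1 ⊗ S h) = Δ(t)(h ⊗ 1)`, i.e. `t₁ ⊗ t₂ S(h) = t₁ h ⊗ t₂`. Applying `id ⊗ T` and using that
`T` is a left integral, which means `x₁ T(x₂) = T(x) 1`, turns this into
`t₁ T(t₂ S(h)) = t₁ T(t₂) h = T(t) h = h`. -/

namespace HopfAlgebra

open Coalgebra

variable {R C ι : Type*} [CommSemiring R] [Semiring C] [HopfAlgebra R C] {c : C}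

lemma sum_comul_mul_one_tmul_antipode (r : Repr R c ι) :
    ∑ i ∈ r.index, comul (R := R) (r.left i) * ((1 : C) ⊗ₜ[R] antipode R (r.right i)) =
      c ⊗ₜ[R] (1 : C) := by
  have hcoassoc := congr(LinearMap.lTensor C (LinearMap.mul' R C ∘ₗ (antipode R).lTensor C)
    $(sum_tmul_tmul_eq r (fun i ↦ ℛ R (r.left i)) (fun i ↦ ℛ R (r.right i))))
  simp only [map_sum, LinearMap.lTensor_tmul, LinearMap.comp_apply,
    LinearMap.mul'_apply] at hcoassoc
  simp_rw [← TensorProduct.tmul_sum, sum_mul_antipode_eq_algebraMap_counit] at hcoassoc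
  have hcounit : ∑ i ∈ r.index, r.left i ⊗ₜ[R] algebraMap R C (counit (r.right i)) =
      c ⊗ₜ[R] (1 : C) := by
    simpa only [map_sum, LinearMap.lTensor_tmul, Algebra.linearMap_apply, map_one]
      using congr(LinearMap.lTensor C (Algebra.linearMap R C) $(sum_tmul_counit_eq r))
  rw [← hcounit, ← hcoassoc]
  refine Finset.sum_congr rfl fun i _ ↦ ?_
  rw [← (ℛ R (r.left i)).eq, Finset.sum_mul]
  simp only [Algebra.TensorProduct.tmul_mul_tmul, mul_one]

end HopfAlgebra

open Coalgebra HopfAlgebra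

lemma IsRightIntegral.comul_mul_one_tmul_antipode {t : H} (ht : IsRightIntegral (k := k) t)
    (h : H) :
    comul (R := k) t * ((1 : H) ⊗ₜ[k] antipode k h) = comul (R := k) t * (h ⊗ₜ[k] (1 : H)) := by
  calc comul (R := k) t * ((1 : H) ⊗ₜ[k] antipode k h)
      = ∑ i ∈ (ℛ k h).index, comul (R := k) (t * (ℛ k h).left i) *
          ((1 : H) ⊗ₜ[k] antipode k ((ℛ k h).right i)) := by
        conv_lhs => rw [← sum_counit_smul (ℛ k h), map_sum, tmul_sum, Finset.mul_sum]
        refine Finset.sum_congr rfl fun i _ ↦ ?_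
        rw [ht, map_smul, map_smul, tmul_smul, mul_smul_comm, smul_mul_assoc]
    _ = comul (R := k) t * (h ⊗ₜ[k] (1 : H)) := by
        simp_rw [Bialgebra.comul_mul, mul_assoc, ← Finset.mul_sum,
          sum_comul_mul_one_tmul_antipode]

lemma IsLeftIntegralDual.rid_map_comul {T : H →ₗ[k] k} (hT : IsLeftIntegralDual T) (x : H) :
    TensorProduct.rid k H (TensorProduct.map LinearMap.id T (comul (R := k) x)) = T x • 1 := by
  rw [← sub_eq_zero, ← Module.forall_dual_apply_eq_zero_iff k]
  intro f
  have hf : f ∘ₗ (TensorProduct.rid k H).toLinearMap ∘ₗ TensorProduct.map LinearMap.id T =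
      LinearMap.mul' k k ∘ₗ TensorProduct.map f T := by
    ext a b
    simp [mul_comm]
  have hfx : f (TensorProduct.rid k H (TensorProduct.map LinearMap.id T (comul (R := k) x))) =
      f 1 * T x :=
    calc _ = conv f T x := congr($hf (comul (R := k) x))
      _ = f 1 * T x := congr($(hT f) x)
  simp [hfx, mul_comm]

theorem integral_antipode_formula'_general
    {k : Type*} [Field k] {H : Type*} [Ring H] [HopfAlgebra k H]
    (T : H →ₗ[k] k) (t : H) (hT : IsLeftIntegralDual T)
    (ht : IsRightIntegral (k := k) t) (hTt : T t = 1) (h : H) :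
    (TensorProduct.rid k H)
      (TensorProduct.map LinearMap.id
        (T ∘ₗ LinearMap.mulRight k (HopfAlgebra.antipode (R := k) h))
        (Coalgebra.comul (R := k) t)) = h := by
  have hright : ∀ u : H ⊗[k] H, TensorProduct.map LinearMap.id
      (T ∘ₗ LinearMap.mulRight k (antipode k h)) u =
        TensorProduct.map LinearMap.id T (u * ((1 : H) ⊗ₜ[k] antipode k h)) := by
    intro u
    induction u using TensorProduct.induction_on with
    | zero => simp
    | tmul a b => simp
    | add u v hu hv => simp only [map_add, add_mul, hu, hv]
  have hleft : ∀ u : H ⊗[k] H, TensorProduct.rid k H (TensorProduct.map LinearMap.id T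
      (u * (h ⊗ₜ[k] (1 : H)))) = TensorProduct.rid k H (TensorProduct.map LinearMap.id T u) * h := by
    intro u
    induction u using TensorProduct.induction_on with
    | zero => simp
    | tmul a b => simp
    | add u v hu hv => simp only [map_add, add_mul, hu, hv]
  rw [hright, ht.comul_mul_one_tmul_antipode, hleft, hT.rid_map_comul, hTt, one_smul, one_mul]

/-- for `H` finite-dimensional, `T` a left integral in `H*` and `t` a
right integral in `H` with `T(t) = 1`, one has `t₁T(t₂S(h)) = h` for all `h`. -/
theorem integral_antipode_formula'
    {k : Type*} [Field k] {H : Type*} [Ring H] [HopfAlgebra k H]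
    [Module.Finite k H]
    (T : H →ₗ[k] k) (t : H) (hT : IsLeftIntegralDual T)
    (ht : IsRightIntegral (k := k) t) (hTt : T t = 1) (h : H) :
    (TensorProduct.rid k H)
      (TensorProduct.map LinearMap.id
        (T ∘ₗ LinearMap.mulRight k (HopfAlgebra.antipode (R := k) h))
        (Coalgebra.comul (R := k) t)) = h :=
  integral_antipode_formula'_general T t hT ht hTt h

end
end
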